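/- arXiv:1406.1330 — 2 statements merged into one kernel-verified Lean document; each statement's English description precedes it below -/
import Mathlib

section
/- Let (X_n) be a sequence of matrix-valued functions on {(x,y) : x ≠ 0, y ≠ 0} with invertible values satisfying the noncommutative q-2DTL equation D₂(D₁(X_n)X_n⁻¹) = σ₂(X_{n+1})X_n⁻¹ − σ₁(σ₂(X_n)X_{n−1}⁻¹), set V_n = σ₂(X_{n+1})X_n⁻¹ and J_n = D₁(X_n)X_n⁻¹, and let (θ_n) satisfy the Lax pair D₂(θ_{n+1}) = V_n θ_n and D₁(θ_n) = −θ_{n+1} + J_n θ_n with every value θ_n(x,y) invertible. Define X̃_n = −θ_{n+1}θ_n⁻¹X_n, Ṽ_n = σ₂(θ_{n+2}θ_{n+1}⁻¹)·V_n·θ_nθ_{n+1}⁻¹ and J̃_n = J_{n+1} + σ₁(θ_{n+1}θ_n⁻¹) − θ_{n+2}θ_{n+1}⁻¹. Then Ṽ_n = σ₂(X̃_{n+1})X̃_n⁻¹ and J̃_n = D₁(X̃_n)X̃_n⁻¹ for all n, and consequently (X̃_n) also satisfies the noncommutative q-2DTL equation. -/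
/-!
Write `X̃ₙ = -Φₙ Xₙ` with `Φₙ = θₙ₊₁ θₙ⁻¹`. The q-Leibniz rules `D(fg) = D f · g + σ f · D g` and
`D(f⁻¹) = -σ(f)⁻¹ · D f · f⁻¹` turn the Lax pair into `D₁Φₙ + σ₁(Φₙ) Jₙ = J̃ₙ Φₙ` and
`D₂Φₙ₊₁ = Vₙ₊₁ - Ṽₙ`. The first is the gauge transformation of `Jₙ = D₁(Xₙ)Xₙ⁻¹` into
`J̃ₙ = D₁(X̃ₙ)X̃ₙ⁻¹`, and `Ṽₙ = σ₂(X̃ₙ₊₁)X̃ₙ⁻¹` is immediate. The second, together with the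
q-2DTL equation for `X` in the form `D₂Jₙ₊₁ = Vₙ₊₁ - σ₁Vₙ`, gives `D₂J̃ₙ = Ṽₙ - σ₁Ṽₙ₋₁`,
which is the q-2DTL equation for `X̃`.
-/

/-- The q-shift homomorphism in `x` on matrix-valued functions. -/
noncomputable def msig1 (q α : ℝ) {m : ℕ} (f : ℝ → ℝ → Matrix (Fin m) (Fin m) ℂ) :
    ℝ → ℝ → Matrix (Fin m) (Fin m) ℂ :=
  fun x y => f (q ^ α * x) y

/-- The q-shift homomorphism in `y` on matrix-valued functions. -/
noncomputable def msig2 (q β : ℝ) {m : ℕ} (f : ℝ → ℝ → Matrix (Fin m) (Fin m) ℂ) :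
    ℝ → ℝ → Matrix (Fin m) (Fin m) ℂ :=
  fun x y => f x (q ^ β * y)

/-- The q-difference operator in `x` on matrix-valued functions. -/
noncomputable def mD1 (q α : ℝ) {m : ℕ} (f : ℝ → ℝ → Matrix (Fin m) (Fin m) ℂ) :
    ℝ → ℝ → Matrix (Fin m) (Fin m) ℂ :=
  fun x y => ((1 - q) * x)⁻¹ • (f x y - f (q ^ α * x) y)

/-- The q-difference operator in `y` on matrix-valued functions. -/
noncomputable def mD2 (q β : ℝ) {m : ℕ} (f : ℝ → ℝ → Matrix (Fin m) (Fin m) ℂ) :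
    ℝ → ℝ → Matrix (Fin m) (Fin m) ℂ :=
  fun x y => ((1 - q) * y)⁻¹ • (f x y - f x (q ^ β * y))

theorem smul_mul_sub_mul {S R : Type*} [Monoid S] [Ring R] [DistribMulAction S R]
    [IsScalarTower S R R] [SMulCommClass S R R] (c : S) (a a' b b' : R) :
    c • (a * b - a' * b') = c • (a - a') * b + a' * c • (b - b') := by
  rw [smul_mul_assoc, mul_smul_comm, ← smul_add, sub_mul, mul_sub, sub_add_sub_cancel]

namespace Matrix

variable {n K : Type*} [Fintype n] [DecidableEq n] [CommRing K]

theorem inv_neg (A : Matrix n n K) : (-A)⁻¹ = -A⁻¹ := by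
  have h : (-1 : Matrix n n K)⁻¹ = -1 := inv_eq_left_inv (by simp)
  rw [← neg_one_mul, mul_inv_rev, h, mul_neg_one]

theorem neg_mul_mul_inv_neg_mul (P A Q B : Matrix n n K) :
    -(P * A) * (-(Q * B))⁻¹ = P * (A * B⁻¹) * Q⁻¹ := by
  rw [inv_neg, neg_mul_neg, mul_inv_rev]
  simp only [Matrix.mul_assoc]

theorem mul_inv_inv {A B : Matrix n n K} (hB : IsUnit B) : (A * B⁻¹)⁻¹ = B * A⁻¹ := by
  rw [mul_inv_rev, nonsing_inv_nonsing_inv _ (B.isUnit_iff_isUnit_det.mp hB)]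

theorem inv_sub_inv' {A B : Matrix n n K} (h : IsUnit A ↔ IsUnit B) :
    A⁻¹ - B⁻¹ = -(B⁻¹ * (A - B) * A⁻¹) := by
  rw [← inv_sub_inv h.symm, neg_sub]

end Matrix

section QDifference

variable {m : ℕ} {q α β : ℝ}

theorem mD2_congr {f g : ℝ → ℝ → Matrix (Fin m) (Fin m) ℂ} {x y : ℝ} (h₀ : f x y = g x y)
    (h₁ : f x (q ^ β * y) = g x (q ^ β * y)) : mD2 q β f x y = mD2 q β g x y := by
  simp only [mD2, h₀, h₁]

variable (f g h : ℝ → ℝ → Matrix (Fin m) (Fin m) ℂ) (x y : ℝ)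

theorem mD1_neg : mD1 q α (-f) x y = -mD1 q α f x y := by
  simp only [mD1, Pi.neg_apply, ← neg_sub', smul_neg]

theorem mD1_mul :
    mD1 q α (f * g) x y = mD1 q α f x y * g x y + f (q ^ α * x) y * mD1 q α g x y :=
  smul_mul_sub_mul _ _ _ _ _

theorem mD2_mul :
    mD2 q β (f * g) x y = mD2 q β f x y * g x y + f x (q ^ β * y) * mD2 q β g x y :=
  smul_mul_sub_mul _ _ _ _ _

theorem mD1_inv (hf : IsUnit (f x y) ↔ IsUnit (f (q ^ α * x) y)) :
    mD1 q α f⁻¹ x y = -((f (q ^ α * x) y)⁻¹ * mD1 q α f x y * (f x y)⁻¹) := by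
  simp only [mD1, Pi.inv_apply, Matrix.inv_sub_inv' hf, smul_neg, mul_smul_comm, smul_mul_assoc]

theorem mD2_inv (hf : IsUnit (f x y) ↔ IsUnit (f x (q ^ β * y))) :
    mD2 q β f⁻¹ x y = -((f x (q ^ β * y))⁻¹ * mD2 q β f x y * (f x y)⁻¹) := by
  simp only [mD2, Pi.inv_apply, Matrix.inv_sub_inv' hf, smul_neg, mul_smul_comm, smul_mul_assoc]

theorem mD2_add_msig1_sub :
    mD2 q β (f + msig1 q α g - h) x y
      = mD2 q β f x y + mD2 q β g (q ^ α * x) y - mD2 q β h x y := by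
  simp only [mD2, msig1, Pi.add_apply, Pi.sub_apply, ← smul_add, ← smul_sub]
  congr 1
  abel

end QDifference

section Lax

variable {m : ℕ} {q α β : ℝ} {θ₀ θ₁ θ₂ : ℝ → ℝ → Matrix (Fin m) (Fin m) ℂ} {x y : ℝ}

theorem mD1_neg_mul_mul_inv {Φ X : ℝ → ℝ → Matrix (Fin m) (Fin m) ℂ} (hX : IsUnit (X x y)) :
    mD1 q α (-(Φ * X)) x y * ((-(Φ * X)) x y)⁻¹
      = (mD1 q α Φ x y + Φ (q ^ α * x) y * (mD1 q α X x y * (X x y)⁻¹)) * (Φ x y)⁻¹ := by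
  simp only [mD1_neg, Pi.neg_apply, Pi.mul_apply]
  rw [Matrix.inv_neg, neg_mul_neg, mD1_mul, Matrix.mul_inv_rev]
  simp only [add_mul, Matrix.mul_assoc,
    Matrix.mul_nonsing_inv_cancel_left _ _ ((X x y).isUnit_iff_isUnit_det.mp hX)]

theorem mD1_mul_inv_of_lax {J₀ J₁ : ℝ → ℝ → Matrix (Fin m) (Fin m) ℂ}
    (h₀ : mD1 q α θ₀ x y = -θ₁ x y + J₀ x y * θ₀ x y)
    (h₁ : mD1 q α θ₁ x y = -θ₂ x y + J₁ x y * θ₁ x y)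
    (hθ₀ : IsUnit (θ₀ x y)) (hθ₀' : IsUnit (θ₀ (q ^ α * x) y)) (hθ₁ : IsUnit (θ₁ x y)) :
    mD1 q α (θ₁ * θ₀⁻¹) x y + θ₁ (q ^ α * x) y * (θ₀ (q ^ α * x) y)⁻¹ * J₀ x y
      = (J₁ x y + θ₁ (q ^ α * x) y * (θ₀ (q ^ α * x) y)⁻¹ - θ₂ x y * (θ₁ x y)⁻¹)
        * (θ₁ x y * (θ₀ x y)⁻¹) := by
  rw [mD1_mul, mD1_inv _ _ _ (iff_of_true hθ₀ hθ₀'), h₀, h₁]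
  simp only [Pi.inv_apply, add_mul, mul_add, sub_mul, neg_mul, mul_neg, Matrix.mul_assoc,
    Matrix.mul_nonsing_inv _ ((θ₀ x y).isUnit_iff_isUnit_det.mp hθ₀),
    Matrix.nonsing_inv_mul_cancel_left _ _ ((θ₁ x y).isUnit_iff_isUnit_det.mp hθ₁), mul_one]
  abel

theorem mD2_mul_inv_of_lax {V₀ V₁ : ℝ → ℝ → Matrix (Fin m) (Fin m) ℂ}
    (h₁ : mD2 q β θ₁ x y = V₀ x y * θ₀ x y) (h₂ : mD2 q β θ₂ x y = V₁ x y * θ₁ x y)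
    (hθ₁ : IsUnit (θ₁ x y)) (hθ₁' : IsUnit (θ₁ x (q ^ β * y))) :
    mD2 q β (θ₂ * θ₁⁻¹) x y
      = V₁ x y - θ₂ x (q ^ β * y) * (θ₁ x (q ^ β * y))⁻¹ * V₀ x y * (θ₀ x y * (θ₁ x y)⁻¹) := by
  rw [mD2_mul, mD2_inv _ _ _ (iff_of_true hθ₁ hθ₁'), h₁, h₂]
  simp only [Pi.inv_apply]
  rw [Matrix.mul_nonsing_inv_cancel_right _ _ ((θ₁ x y).isUnit_iff_isUnit_det.mp hθ₁)]
  simp only [mul_neg, Matrix.mul_assoc, sub_eq_add_neg]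

theorem mD1_neg_mul_mul_inv_of_lax {X J₀ J₁ : ℝ → ℝ → Matrix (Fin m) (Fin m) ℂ}
    (hJ₀ : J₀ x y = mD1 q α X x y * (X x y)⁻¹)
    (h₀ : mD1 q α θ₀ x y = -θ₁ x y + J₀ x y * θ₀ x y)
    (h₁ : mD1 q α θ₁ x y = -θ₂ x y + J₁ x y * θ₁ x y)
    (hX : IsUnit (X x y)) (hθ₀ : IsUnit (θ₀ x y)) (hθ₀' : IsUnit (θ₀ (q ^ α * x) y))
    (hθ₁ : IsUnit (θ₁ x y)) :
    mD1 q α (-(θ₁ * θ₀⁻¹ * X)) x y * ((-(θ₁ * θ₀⁻¹ * X)) x y)⁻¹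
      = J₁ x y + θ₁ (q ^ α * x) y * (θ₀ (q ^ α * x) y)⁻¹ - θ₂ x y * (θ₁ x y)⁻¹ := by
  have hΦ : IsUnit (θ₁ x y * (θ₀ x y)⁻¹) :=
    hθ₁.mul (Matrix.isUnit_nonsing_inv_iff.mpr hθ₀)
  rw [mD1_neg_mul_mul_inv hX, ← hJ₀]
  simp only [Pi.mul_apply, Pi.inv_apply]
  rw [mD1_mul_inv_of_lax h₀ h₁ hθ₀ hθ₀' hθ₁,
    Matrix.mul_nonsing_inv_cancel_right _ _ (Matrix.isUnit_iff_isUnit_det _ |>.mp hΦ)]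

end Lax

theorem stmt_6_general (q α β : ℝ) (hq : 0 < q) (m : ℕ)
    (X : ℤ → ℝ → ℝ → Matrix (Fin m) (Fin m) ℂ)
    (hXinv : ∀ (n : ℤ) (x y : ℝ), IsUnit (X n x y))
    (hX2DTL : ∀ (n : ℤ) (x y : ℝ), x ≠ 0 → y ≠ 0 →
      mD2 q β (fun u v => mD1 q α (X n) u v * (X n u v)⁻¹) x y
        = X (n + 1) x (q ^ β * y) * (X n x y)⁻¹
          - X n (q ^ α * x) (q ^ β * y) * (X (n - 1) (q ^ α * x) y)⁻¹)
    (V J : ℤ → ℝ → ℝ → Matrix (Fin m) (Fin m) ℂ)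
    (hV : ∀ (n : ℤ) (x y : ℝ), V n x y = X (n + 1) x (q ^ β * y) * (X n x y)⁻¹)
    (hJ : ∀ (n : ℤ) (x y : ℝ), J n x y = mD1 q α (X n) x y * (X n x y)⁻¹)
    (θ : ℤ → ℝ → ℝ → Matrix (Fin m) (Fin m) ℂ)
    (hθ2 : ∀ (n : ℤ) (x y : ℝ), x ≠ 0 → y ≠ 0 →
      mD2 q β (θ (n + 1)) x y = V n x y * θ n x y)
    (hθ1 : ∀ (n : ℤ) (x y : ℝ), x ≠ 0 → y ≠ 0 →
      mD1 q α (θ n) x y = -θ (n + 1) x y + J n x y * θ n x y)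
    (hθinv : ∀ (n : ℤ) (x y : ℝ), IsUnit (θ n x y))
    (Xt Vt Jt : ℤ → ℝ → ℝ → Matrix (Fin m) (Fin m) ℂ)
    (hXt : ∀ (n : ℤ) (x y : ℝ),
      Xt n x y = -(θ (n + 1) x y * (θ n x y)⁻¹ * X n x y))
    (hVt : ∀ (n : ℤ) (x y : ℝ),
      Vt n x y = (θ (n + 2) x (q ^ β * y) * (θ (n + 1) x (q ^ β * y))⁻¹)
        * V n x y * (θ n x y * (θ (n + 1) x y)⁻¹))
    (hJt : ∀ (n : ℤ) (x y : ℝ),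
      Jt n x y = J (n + 1) x y + θ (n + 1) (q ^ α * x) y * (θ n (q ^ α * x) y)⁻¹
        - θ (n + 2) x y * (θ (n + 1) x y)⁻¹) :
    (∀ (n : ℤ) (x y : ℝ), x ≠ 0 → y ≠ 0 →
        Vt n x y = Xt (n + 1) x (q ^ β * y) * (Xt n x y)⁻¹
          ∧ Jt n x y = mD1 q α (Xt n) x y * (Xt n x y)⁻¹)
      ∧ (∀ (n : ℤ) (x y : ℝ), x ≠ 0 → y ≠ 0 →
        mD2 q β (fun u v => mD1 q α (Xt n) u v * (Xt n u v)⁻¹) x y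
          = Xt (n + 1) x (q ^ β * y) * (Xt n x y)⁻¹
            - Xt n (q ^ α * x) (q ^ β * y) * (Xt (n - 1) (q ^ α * x) y)⁻¹) := by
  have hqx : ∀ {x : ℝ}, x ≠ 0 → q ^ α * x ≠ 0 := mul_ne_zero (Real.rpow_pos_of_pos hq α).ne'
  have add_one_add_one : ∀ n : ℤ, n + 1 + 1 = n + 2 := fun n => by ring
  have potentials : ∀ (n : ℤ) (x y : ℝ), x ≠ 0 → y ≠ 0 →
      Vt n x y = Xt (n + 1) x (q ^ β * y) * (Xt n x y)⁻¹
        ∧ Jt n x y = mD1 q α (Xt n) x y * (Xt n x y)⁻¹ := by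
    intro n x y hx hy
    constructor
    · rw [hVt, hV, hXt, hXt, add_one_add_one, Matrix.neg_mul_mul_inv_neg_mul,
        Matrix.mul_inv_inv (hθinv n x y)]
    · have hθ1' := hθ1 (n + 1) x y hx hy
      rw [add_one_add_one] at hθ1'
      rw [hJt, show Xt n = -(θ (n + 1) * (θ n)⁻¹ * X n) from funext₂ (hXt n),
        mD1_neg_mul_mul_inv_of_lax (hJ n x y) (hθ1 n x y hx hy) hθ1' (hXinv n x y)
          (hθinv n x y) (hθinv n _ y) (hθinv (n + 1) x y)]
  have hD2ratio : ∀ (k : ℤ) (x y : ℝ), x ≠ 0 → y ≠ 0 →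
      mD2 q β (θ (k + 2) * (θ (k + 1))⁻¹) x y = V (k + 1) x y - Vt k x y := by
    intro k x y hx hy
    have h := hθ2 (k + 1) x y hx hy
    rw [add_one_add_one] at h
    rw [hVt, mD2_mul_inv_of_lax (hθ2 k x y hx hy) h (hθinv _ x y) (hθinv _ x _)]
  refine ⟨potentials, fun n x y hx hy => ?_⟩
  have hD2J : mD2 q β (J (n + 1)) x y = V (n + 1) x y - V n (q ^ α * x) y := by
    have h := hX2DTL (n + 1) x y hx hy
    rwa [add_sub_cancel_right, ← hV, ← hV, ← funext₂ (hJ (n + 1))] at h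
  have hJt' : Jt n = J (n + 1) + msig1 q α (θ (n + 1) * (θ n)⁻¹) - θ (n + 2) * (θ (n + 1))⁻¹ :=
    funext₂ (hJt n)
  have hVt' := (potentials (n - 1) (q ^ α * x) y (hqx hx) hy).1
  have hD2ratio' := hD2ratio (n - 1) (q ^ α * x) y (hqx hx) hy
  rw [sub_add_cancel] at hVt'
  rw [show n - 1 + 2 = n + 1 by ring, sub_add_cancel] at hD2ratio'
  rw [mD2_congr (potentials n x y hx hy).2.symm (potentials n x _ hx (mul_ne_zero (Real.rpow_pos_of_pos hq β).ne' hy)).2.symm,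
    ← (potentials n x y hx hy).1, ← hVt', hJt', mD2_add_msig1_sub, hD2J, hD2ratio',
    hD2ratio n x y hx hy]
  abel

/-- The Darboux transformation maps solutions of the noncommutative q-2DTL
equation to new solutions: the transformed potentials are again of the form
`σ₂(X̃_{n+1})X̃_n⁻¹`, `D₁(X̃_n)X̃_n⁻¹`, and `X̃` again solves the nc q-2DTL
equation. -/
theorem stmt_6 (q α β : ℝ) (hq : 0 < q) (hq1 : q ≠ 1) (m : ℕ) (hm : 1 ≤ m)
    (X : ℤ → ℝ → ℝ → Matrix (Fin m) (Fin m) ℂ)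
    (hXinv : ∀ (n : ℤ) (x y : ℝ), IsUnit (X n x y))
    (hX2DTL : ∀ (n : ℤ) (x y : ℝ), x ≠ 0 → y ≠ 0 →
      mD2 q β (fun u v => mD1 q α (X n) u v * (X n u v)⁻¹) x y
        = X (n + 1) x (q ^ β * y) * (X n x y)⁻¹
          - X n (q ^ α * x) (q ^ β * y) * (X (n - 1) (q ^ α * x) y)⁻¹)
    (V J : ℤ → ℝ → ℝ → Matrix (Fin m) (Fin m) ℂ)
    (hV : ∀ (n : ℤ) (x y : ℝ), V n x y = X (n + 1) x (q ^ β * y) * (X n x y)⁻¹)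
    (hJ : ∀ (n : ℤ) (x y : ℝ), J n x y = mD1 q α (X n) x y * (X n x y)⁻¹)
    (θ : ℤ → ℝ → ℝ → Matrix (Fin m) (Fin m) ℂ)
    (hθ2 : ∀ (n : ℤ) (x y : ℝ), x ≠ 0 → y ≠ 0 →
      mD2 q β (θ (n + 1)) x y = V n x y * θ n x y)
    (hθ1 : ∀ (n : ℤ) (x y : ℝ), x ≠ 0 → y ≠ 0 →
      mD1 q α (θ n) x y = -θ (n + 1) x y + J n x y * θ n x y)
    (hθinv : ∀ (n : ℤ) (x y : ℝ), IsUnit (θ n x y))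
    (Xt Vt Jt : ℤ → ℝ → ℝ → Matrix (Fin m) (Fin m) ℂ)
    (hXt : ∀ (n : ℤ) (x y : ℝ),
      Xt n x y = -(θ (n + 1) x y * (θ n x y)⁻¹ * X n x y))
    (hVt : ∀ (n : ℤ) (x y : ℝ),
      Vt n x y = (θ (n + 2) x (q ^ β * y) * (θ (n + 1) x (q ^ β * y))⁻¹)
        * V n x y * (θ n x y * (θ (n + 1) x y)⁻¹))
    (hJt : ∀ (n : ℤ) (x y : ℝ),
      Jt n x y = J (n + 1) x y + θ (n + 1) (q ^ α * x) y * (θ n (q ^ α * x) y)⁻¹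
        - θ (n + 2) x y * (θ (n + 1) x y)⁻¹) :
    (∀ (n : ℤ) (x y : ℝ), x ≠ 0 → y ≠ 0 →
        Vt n x y = Xt (n + 1) x (q ^ β * y) * (Xt n x y)⁻¹
          ∧ Jt n x y = mD1 q α (Xt n) x y * (Xt n x y)⁻¹)
      ∧ (∀ (n : ℤ) (x y : ℝ), x ≠ 0 → y ≠ 0 →
        mD2 q β (fun u v => mD1 q α (Xt n) u v * (Xt n u v)⁻¹) x y
          = Xt (n + 1) x (q ^ β * y) * (Xt n x y)⁻¹
            - Xt n (q ^ α * x) (q ^ β * y) * (Xt (n - 1) (q ^ α * x) y)⁻¹) :=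
  stmt_6_general q α β hq m X hXinv hX2DTL V J hV hJ θ hθ2 hθ1 hθinv Xt Vt Jt hXt hVt hJt
end

section
/- Assume every θ^{(k)}_n[k] (1 ≤ k ≤ N, n ∈ ℤ) is invertible and that for every n ∈ ℤ the N×N matrix C(n) over R with entries C(n)_{j,i} = θ_{n+N−j, i} (1 ≤ j, i ≤ N) is invertible. Let (X_n) be a sequence in R and define X_n[1] = X_n and X_n[k+1] = −θ^{(k)}_{n+1}[k]·(θ^{(k)}_n[k])⁻¹·X_n[k]. Then for every n ∈ ℤ: X_n[N+1] = ( −Σ_{i=1}^{N} θ_{n+N, i}·(C(n)⁻¹)_{i,N} ) · X_n, i.e. X_n[N+1] equals the quasideterminant of the (N+1)×(N+1) array with rows (θ_{n+N,1},…,θ_{n+N,N},0), …, (θ_{n+1,1},…,θ_{n+1,N},0), (θ_{n,1},…,θ_{n,N},1) expanded about the boxed 0 in the top right, multiplied on the right by X_n. -/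
/-!
With `B n k = θ^{(k)}_{n+1}[k] (θ^{(k)}_n[k])⁻¹`, the `k`-th Darboux step is the difference
operator `f ↦ -f (n + 1) + B n k * f n`, so `θ^{(i)}[N+1]` is `(-1)^N D θ_i` for the monic order-`N`
operator `D = Σ_m c_m(n) S^m`, while `X[N+1] = c_0(n) X`. The `k`-th step kills its own seed
(`θ^{(k)}[k+1] = 0` by invertibility of `θ^{(k)}[k]`), so `D θ_i = 0` for all `i`: the row `(c_{N-1}, …, c_0)` times `C(n)` is `-θ_{n+N}`, and `c_0` is read
off from `C(n)⁻¹`.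
-/

open Finset

namespace Darboux

variable {R : Type*} [Ring R] (B : ℤ → ℕ → R)

/-- `coeff B k n m` is the coefficient of `f (n + m)` in `(D_{k-1} ∘ ⋯ ∘ D_0) f` at `n`, where
`(D_k f) n = f (n + 1) - B n k * f n`; the Darboux steps are `-D_k`. -/
def coeff : ℕ → ℤ → ℕ → R
  | 0, _, 0 => 1
  | 0, _, _ + 1 => 0
  | k + 1, n, 0 => -(B n k * coeff k n 0)
  | k + 1, n, m + 1 => coeff k (n + 1) m - B n k * coeff k n (m + 1)

theorem coeff_eq_zero_of_lt {k m : ℕ} (h : k < m) (n : ℤ) : coeff B k n m = 0 := by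
  induction k generalizing m n with
  | zero => obtain ⟨m, rfl⟩ := Nat.exists_eq_add_one_of_ne_zero (by omega : m ≠ 0); rfl
  | succ k ih =>
    obtain ⟨m, rfl⟩ := Nat.exists_eq_add_one_of_ne_zero (by omega : m ≠ 0)
    simp only [coeff, ih (by omega : k < m), ih (by omega : k < m + 1), mul_zero, sub_zero]

@[simp]
theorem coeff_self (k : ℕ) (n : ℤ) : coeff B k n k = 1 := by
  induction k generalizing n with
  | zero => rfl
  | succ k ih => simp only [coeff, ih, coeff_eq_zero_of_lt B (Nat.lt_succ_self k), mul_zero, sub_zero]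

theorem sum_coeff_succ (f : ℤ → R) (k : ℕ) (n : ℤ) :
    ∑ m ∈ range (k + 2), coeff B (k + 1) n m * f (n + m)
      = ∑ m ∈ range (k + 1), coeff B k (n + 1) m * f (n + 1 + m)
        - B n k * ∑ m ∈ range (k + 1), coeff B k n m * f (n + m) := by
  have hext : ∑ m ∈ range (k + 1), coeff B k n m * f (n + m)
      = ∑ m ∈ range (k + 2), coeff B k n m * f (n + m) := by
    rw [sum_range_succ _ (k + 1), coeff_eq_zero_of_lt B (Nat.lt_succ_self k), zero_mul, add_zero]
  have hshift (m : ℕ) : n + ((m + 1 : ℕ) : ℤ) = n + 1 + m := by push_cast; ring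
  rw [hext, sum_range_succ', sum_range_succ' _ (k + 1)]
  simp only [coeff, hshift, sub_mul, sum_sub_distrib, mul_add, mul_sum, mul_assoc, neg_mul]
  abel

variable {B} {K : ℕ}

theorem eq_neg_one_pow_mul_sum_coeff {f : ℕ → ℤ → R}
    (hf : ∀ k < K, ∀ n, f (k + 1) n = -f k (n + 1) + B n k * f k n) {k : ℕ} (hk : k ≤ K)
    (n : ℤ) : f k n = (-1) ^ k * ∑ m ∈ range (k + 1), coeff B k n m * f 0 (n + m) := by
  induction k generalizing n with
  | zero => simp [coeff]
  | succ k ih =>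
    have hsign : Commute ((-1 : R) ^ k) (B n k) := (Commute.neg_one_left _).pow_left k
    rw [hf k hk, ih (by omega), ih (by omega), sum_coeff_succ, pow_succ, mul_neg_one, neg_mul,
      mul_sub, ← mul_assoc, ← mul_assoc, hsign.eq]
    abel

theorem eq_zero_of_eq_zero {f : ℕ → ℤ → R}
    (hf : ∀ k < K, ∀ n, f (k + 1) n = -f k (n + 1) + B n k * f k n) {j k : ℕ} (hjk : j ≤ k)
    (hk : k ≤ K) (hj : ∀ n, f j n = 0) (n : ℤ) : f k n = 0 := by
  induction k, hjk using Nat.le_induction generalizing n with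
  | base => exact hj n
  | succ k _ ih => rw [hf k hk, ih (by omega), ih (by omega), mul_zero, neg_zero, add_zero]

theorem eq_coeff_zero_mul {g : ℕ → ℤ → R} (hg : ∀ k < K, ∀ n, g (k + 1) n = -(B n k * g k n))
    {k : ℕ} (hk : k ≤ K) (n : ℤ) : g k n = coeff B k n 0 * g 0 n := by
  induction k with
  | zero => simp [coeff]
  | succ k ih => rw [hg k hk, ih (by omega), coeff, neg_mul, mul_assoc]

end Darboux

section Casorati

open Matrix

variable {R : Type*} [Ring R] {N : ℕ} {θ : ℤ → Fin N → R} {C : Matrix (Fin N) (Fin N) R} {n : ℤ}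

theorem vecMul_casorati (hC : ∀ j i, C j i = θ (n + N - 1 - (j : ℕ)) i) (a : ℕ → R) :
    (fun j => a (Fin.rev j)) ᵥ* C = fun i => ∑ m ∈ range N, a m * θ (n + m) i := by
  ext i
  have hrev (j : Fin N) : n + N - 1 - (j : ℕ) = n + (Fin.rev j : ℕ) := by
    rw [Fin.val_rev]; omega
  simp only [vecMul, dotProduct, hC, hrev]
  rw [Fintype.sum_equiv Fin.revPerm (fun j => a (Fin.rev j) * θ (n + (Fin.rev j : ℕ)) i)
      (fun j => a j * θ (n + (j : ℕ)) i) fun _ => rfl,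
    Fin.sum_univ_eq_sum_range (fun m => a m * θ (n + m) i)]

theorem eq_sum_mul_inv_of_sum_mul_eq (hN : 0 < N) (hC : ∀ j i, C j i = θ (n + N - 1 - (j : ℕ)) i)
    {Cinv : Matrix (Fin N) (Fin N) R} (hCl : C * Cinv = 1) {a : ℕ → R} {b : Fin N → R}
    (ha : ∀ i, ∑ m ∈ range N, a m * θ (n + m) i = b i) :
    a 0 = ∑ i, b i * Cinv i ⟨N - 1, Nat.sub_one_lt_of_lt hN⟩ := by
  have hv : (fun j => a (Fin.rev j)) = b ᵥ* Cinv := by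
    rw [← funext ha, ← vecMul_casorati hC, vecMul_vecMul, hCl, vecMul_one]
  have hlast := congrFun hv ⟨N - 1, by omega⟩
  simpa [Fin.rev, vecMul, dotProduct, show N - (N - 1 + 1) = 0 by omega] using hlast

end Casorati

open Darboux in
/-- Quasideterminant closed form of the `N`-fold iterated Darboux transform
`X_n[N+1]` for the noncommutative q-2DTL equation.  Here `th i n k` stands for
`θ^{(i)}_n[k+1]` and `Xit n k` for `X_n[k+1]` (the iteration index is shifted
so that it starts at `0` instead of `1`), and `C n` is the Casorati-type
coefficient matrix with entries `C(n)_{j,i} = θ_{n+N-1-j,i}` (indices starting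
from `0`); the last column of `C(n)⁻¹` has (0-based) index `N-1`. -/
theorem stmt_8 {R : Type*} [Ring R] (N : ℕ) (hN : 0 < N)
    (θ : ℤ → Fin N → R)
    (th : Fin N → ℤ → ℕ → R)
    (hth0 : ∀ (i : Fin N) (n : ℤ), th i n 0 = θ n i)
    (hthS : ∀ (i : Fin N) (n : ℤ) (k : ℕ) (hk : k < N),
      th i n (k + 1) = -th i (n + 1) k
        + th ⟨k, hk⟩ (n + 1) k * Ring.inverse (th ⟨k, hk⟩ n k) * th i n k)
    (hunit : ∀ (k : ℕ) (hk : k < N) (n : ℤ), IsUnit (th ⟨k, hk⟩ n k))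
    (C : ℤ → Matrix (Fin N) (Fin N) R)
    (hC : ∀ (n : ℤ) (j i : Fin N), C n j i = θ (n + (N : ℤ) - 1 - ((j : ℕ) : ℤ)) i)
    (Cinv : ℤ → Matrix (Fin N) (Fin N) R)
    (hCl : ∀ n : ℤ, C n * Cinv n = 1)
    (X : ℤ → R) (Xit : ℤ → ℕ → R)
    (hXit0 : ∀ n : ℤ, Xit n 0 = X n)
    (hXitS : ∀ (n : ℤ) (k : ℕ) (hk : k < N),
      Xit n (k + 1)
        = -(th ⟨k, hk⟩ (n + 1) k * Ring.inverse (th ⟨k, hk⟩ n k) * Xit n k)) :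
    ∀ n : ℤ, Xit n N
      = (-(∑ i : Fin N, θ (n + (N : ℤ)) i * Cinv n i ⟨N - 1, by omega⟩)) * X n := by
  intro n
  set B : ℤ → ℕ → R := fun m k =>
    if hk : k < N then th ⟨k, hk⟩ (m + 1) k * Ring.inverse (th ⟨k, hk⟩ m k) else 0
  have hB (m : ℤ) (k : ℕ) (hk : k < N) :
      th ⟨k, hk⟩ (m + 1) k * Ring.inverse (th ⟨k, hk⟩ m k) = B m k := by simp [B, hk]
  have hrec (i : Fin N) : ∀ k < N, ∀ m, th i m (k + 1) = -th i (m + 1) k + B m k * th i m k :=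
    fun k hk m => by rw [hthS _ _ _ hk, hB]
  have hvanish (i : Fin N) : th i n N = 0 := by
    refine eq_zero_of_eq_zero (f := fun k m => th i m k) (hrec i) i.isLt le_rfl (fun m => ?_) n
    simpa [mul_assoc, Ring.inverse_mul_cancel _ (hunit i i.isLt m)] using hthS i m i i.isLt
  have hrel (i : Fin N) : ∑ m ∈ range N, coeff B N n m * θ (n + m) i = -θ (n + N) i := by
    have h := eq_neg_one_pow_mul_sum_coeff (f := fun k m => th i m k) (hrec i) le_rfl n
    simp only [hvanish, hth0, sum_range_succ, coeff_self, one_mul] at h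
    exact eq_neg_of_add_eq_zero_left (neg_one_pow_mul_eq_zero_iff.1 h.symm)
  have hXrec : ∀ k < N, ∀ m, Xit m (k + 1) = -(B m k * Xit m k) :=
    fun k hk m => by rw [hXitS _ _ hk, hB]
  rw [eq_coeff_zero_mul (g := fun k m => Xit m k) hXrec le_rfl n, hXit0,
    eq_sum_mul_inv_of_sum_mul_eq hN (hC n) (hCl n) hrel]
  simp only [neg_mul, sum_neg_distrib]
end
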